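/- In the Poisson algebra of the previous context (variables b^{(t)}_{i,j}, c^{(t)}_{j,i} with {b^{(t)}_{i,j}, c^{(t)}_{j,i}} = −1 and other brackets zero), define μ_i = (−1)^{n−i} t^{−1} (Δ^{1,i+1,…,n}_{i,i+1,…,n}(C_1)/Δ^{i+1,…,n}_{i+1,…,n}(C_t)) ∑_{k=1}^{i} (Δ^{i,i+1,…,n}_{k,i+1,…,n}(C_t)/Δ^{i,…,n}_{i,…,n}(C_t)) b^{(t)}_{k,1} and λ_i = (−1)^{n−i+1} t · Δ^{1,i+1,…,n}_{i,i+1,…,n}(C_t)/Δ^{1,i+1,…,n}_{i,i+1,…,n}(C_1). Then {λ_i, λ_j} = 0 and {μ_i, μ_j} = 0 for all i, j. -/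

import Mathlib

open Matrix Finset

/-- The minor determinant `Δ^{rows}_{cols}(C)`. -/
def minorDet {R : Type*} [CommRing R] {n r : ℕ} (C : Matrix (Fin n) (Fin n) R)
    (rows cols : Fin r → Fin n) : R :=
  (C.submatrix rows cols).det

/-- The index list `(i, i+1, …, n-1)` (0-based). -/
def idxFrom {n : ℕ} (i : ℕ) : Fin (n - i) → Fin n :=
  fun l => ⟨i + l.1, by have := l.2; omega⟩

/-- The index list `(k, i+1, …, n-1)` (0-based). -/
def idxRepl {n : ℕ} (i : ℕ) (k : Fin n) : Fin (n - i) → Fin n :=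
  fun l => if l.1 = 0 then k else ⟨i + l.1, by have := l.2; omega⟩

/-- `Δ^{1,i+1,…,n}_{i,i+1,…,n}(C)` (0-based: rows `(0, i+1, …, n-1)`, columns
`(i, …, n-1)`). -/
def minA {R : Type*} [CommRing R] {n : ℕ} (C : Matrix (Fin n) (Fin n) R)
    (i : Fin n) : R :=
  minorDet C (idxRepl i.1 ⟨0, by have := i.isLt; omega⟩) (idxFrom i.1)

/-- `Δ^{i,i+1,…,n}_{k,i+1,…,n}(C)`. -/
def minB {R : Type*} [CommRing R] {n : ℕ} (C : Matrix (Fin n) (Fin n) R)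
    (i k : Fin n) : R :=
  minorDet C (idxFrom i.1) (idxRepl i.1 k)

/-- `Δ^{i+1,…,n}_{i+1,…,n}(C)`. -/
def minC {R : Type*} [CommRing R] {n : ℕ} (C : Matrix (Fin n) (Fin n) R)
    (i : Fin n) : R :=
  minorDet C (idxFrom (i.1 + 1)) (idxFrom (i.1 + 1))

/-- `Δ^{i,…,n}_{i,…,n}(C)`. -/
def minD {R : Type*} [CommRing R] {n : ℕ} (C : Matrix (Fin n) (Fin n) R)
    (i : Fin n) : R :=
  minorDet C (idxFrom i.1) (idxFrom i.1)

/-- `μ_i = (-1)^{n-1-i} t⁻¹ (Δ^{0,i+1,…}_{i,…}(C₁)/Δ^{i+1,…}_{i+1,…}(C_t))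
  ∑_{k≤i} (Δ^{i,…}_{k,i+1,…}(C_t)/Δ^{i,…}_{i,…}(C_t)) b_k`  (0-based). -/
def muVar {A : Type*} [Field A] {n : ℕ} (t : A) (b : Fin n → A)
    (Ct C1 : Matrix (Fin n) (Fin n) A) (i : Fin n) : A :=
  (-1 : A) ^ (n - 1 - i.1) * t⁻¹ * (minA C1 i / minC Ct i) *
    ∑ k : Fin n, if k.1 ≤ i.1 then (minB Ct i k / minD Ct i) * b k else 0

/-- `λ_i = (-1)^{n-i} t · Δ^{0,i+1,…}_{i,…}(C_t)/Δ^{0,i+1,…}_{i,…}(C₁)` (0-based). -/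
def lamVar {A : Type*} [Field A] {n : ℕ} (t : A)
    (Ct C1 : Matrix (Fin n) (Fin n) A) (i : Fin n) : A :=
  (-1 : A) ^ (n - i.1) * t * (minA Ct i / minA C1 i)

/-!
Both families live in subfields generated by pairwise Poisson-commuting elements, and the
bracket vanishes identically on such a subfield: for fixed `z`, the `x` with `{x, z} = 0` form a
subfield since `{·, z}` is an additive derivation. The `λ_i` are rational in `t` and the entries of
`C_t`, `C_1`, which all commute. The `μ_i` involve `b^{(t)}_{k,1}` but none of the entries
`c^{(t)}_{1,k}` of the first row of `C_t`, the only generators not commuting with the `b`'s; for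
`i = 0` the first row does enter, but only through `Δ^{1,…,n}_{1,…,n}(C_t)/Δ^{1,…,n}_{1,…,n}(C_t)`,
which is `0` or `1`.
-/

section Bracket

variable {A : Type*} [Field A] {P : A → A → A}

theorem bracket_zero_left (haddl : ∀ x y z : A, P (x + y) z = P x z + P y z) (z : A) :
    P 0 z = 0 := by
  have h := haddl 0 0 z
  rwa [zero_add, left_eq_add] at h

theorem bracket_one_left (hleib : ∀ x y z : A, P (x * y) z = x * P y z + y * P x z) (z : A) :
    P 1 z = 0 := by
  have h := hleib 1 1 z
  rwa [one_mul, one_mul, left_eq_add] at h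

def bracketLeftKernel (haddl : ∀ x y z : A, P (x + y) z = P x z + P y z)
    (hleib : ∀ x y z : A, P (x * y) z = x * P y z + y * P x z) (z : A) : Subfield A where
  carrier := {x | P x z = 0}
  zero_mem' := bracket_zero_left haddl z
  one_mem' := bracket_one_left hleib z
  add_mem' {x y} (hx : P x z = 0) (hy : P y z = 0) := by
    show P (x + y) z = 0
    rw [haddl, hx, hy, add_zero]
  mul_mem' {x y} (hx : P x z = 0) (hy : P y z = 0) := by
    show P (x * y) z = 0
    rw [hleib, hx, hy, mul_zero, mul_zero, add_zero]
  neg_mem' {x} (hx : P x z = 0) := by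
    have h := haddl x (-x) z
    rwa [add_neg_cancel, bracket_zero_left haddl, hx, zero_add, eq_comm] at h
  inv_mem' x (hx : P x z = 0) := by
    show P x⁻¹ z = 0
    rcases eq_or_ne x 0 with rfl | hx0
    · rw [_root_.inv_zero]; exact bracket_zero_left haddl z
    · have h := hleib x x⁻¹ z
      rw [mul_inv_cancel₀ hx0, bracket_one_left hleib, hx, mul_zero, add_zero, eq_comm] at h
      exact (mul_eq_zero.mp h).resolve_left hx0

theorem bracket_eq_zero_of_mem_closure (haddl : ∀ x y z : A, P (x + y) z = P x z + P y z)
    (hleib : ∀ x y z : A, P (x * y) z = x * P y z + y * P x z)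
    (hskew : ∀ x y : A, P x y = -P y x) {S : Set A} (hS : ∀ x ∈ S, ∀ y ∈ S, P x y = 0)
    {x y : A} (hx : x ∈ Subfield.closure S) (hy : y ∈ Subfield.closure S) : P x y = 0 := by
  have hyS : ∀ g ∈ S, P y g = 0 := fun g hg =>
    (Subfield.closure_le (t := bracketLeftKernel haddl hleib g)).mpr
      (fun g' hg' => hS g' hg' g hg) hy
  refine (Subfield.closure_le (t := bracketLeftKernel haddl hleib y)).mpr (fun g hg => ?_) hx
  show P g y = 0
  rw [hskew, hyS g hg, neg_zero]

end Bracket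

theorem Subring.det_mem {R : Type*} [CommRing R] (K : Subring R) {m : Type*} [Fintype m]
    [DecidableEq m] {M : Matrix m m R} (hM : ∀ i j, M i j ∈ K) : M.det ∈ K := by
  have h := K.subtype.map_det (Matrix.of fun i j => (⟨M i j, hM i j⟩ : K))
  exact h ▸ Subtype.coe_prop _

theorem minorDet_mem {R : Type*} [Field R] (K : Subfield R) {n r : ℕ}
    {C : Matrix (Fin n) (Fin n) R} {rows cols : Fin r → Fin n}
    (h : ∀ a b, C (rows a) (cols b) ∈ K) : minorDet C rows cols ∈ K :=
  K.toSubring.det_mem fun a b => h a b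

theorem idxRepl_self {n i : ℕ} (hi : i < n) : idxRepl (n := n) i ⟨i, hi⟩ = idxFrom i := by
  funext l
  unfold idxRepl idxFrom
  split_ifs with hl
  · exact Fin.ext (by simp [hl])
  · rfl

theorem minB_self {R : Type*} [CommRing R] {n : ℕ} (C : Matrix (Fin n) (Fin n) R) (i : Fin n) :
    minB C i i = minD C i := by
  rw [minB, minD, ← idxRepl_self i.isLt]

section Membership

variable {A : Type*} [Field A] {n : ℕ} {K : Subfield A} {t : A} {b : Fin n → A}
  {Ct C1 : Matrix (Fin n) (Fin n) A}

theorem lamVar_mem (ht : t ∈ K) (hCt : ∀ l m, Ct l m ∈ K) (hC1 : ∀ l m, C1 l m ∈ K)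
    (i : Fin n) : lamVar t Ct C1 i ∈ K :=
  mul_mem (mul_mem (pow_mem (neg_mem (one_mem K)) _) ht)
    (div_mem (minorDet_mem K fun _ _ => hCt _ _) (minorDet_mem K fun _ _ => hC1 _ _))

theorem muVar_mem (ht : t ∈ K) (hb : ∀ k, b k ∈ K) (hC1 : ∀ l m, C1 l m ∈ K)
    (hCt : ∀ l m, l.val ≠ 0 → Ct l m ∈ K) (i : Fin n) : muVar t b Ct C1 i ∈ K := by
  have hrows : ∀ {j : ℕ} (a : Fin (n - j)), 0 < j → (idxFrom (n := n) j a).val ≠ 0 :=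
    fun a hj => by simp only [idxFrom]; omega
  have hratio : ∀ k : Fin n, k.val ≤ i.val → minB Ct i k / minD Ct i ∈ K := by
    intro k hk
    rcases Nat.eq_zero_or_pos i.val with hi | hi
    · obtain rfl : k = i := Fin.ext (by omega)
      rw [minB_self]
      rcases eq_or_ne (minD Ct k) 0 with h0 | h0
      · rw [h0, div_zero]; exact zero_mem K
      · rw [div_self h0]; exact one_mem K
    · exact div_mem (minorDet_mem K fun a _ => hCt _ _ (hrows a hi))
        (minorDet_mem K fun a _ => hCt _ _ (hrows a hi))
  refine mul_mem (mul_mem (mul_mem (pow_mem (neg_mem (one_mem K)) _) (inv_mem ht)) ?_) ?_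
  · exact div_mem (minorDet_mem K fun _ _ => hC1 _ _)
      (minorDet_mem K fun a _ => hCt _ _ (hrows a i.val.succ_pos))
  · refine sum_mem fun k _ => ?_
    split_ifs with hk
    · exact mul_mem (hratio k hk) (hb k)
    · exact zero_mem K

end Membership

/-- in the Poisson algebra generated by `b^{(t)}_{k,1}` and the
entries of `C_t`, `C_1`, with `{b^{(t)}_{k,1}, c^{(t)}_{1,k}} = -1` the only
nonvanishing brackets among generators and `t` central, the variables `λ_i`, `μ_i`
satisfy `{λ_i, λ_j} = 0` and `{μ_i, μ_j} = 0` for all `i, j`. -/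
theorem stmt_13 (n : ℕ) (A : Type*) [Field A] (P : A → A → A)
    (haddl : ∀ x y z : A, P (x + y) z = P x z + P y z)
    (hleib : ∀ x y z : A, P (x * y) z = x * P y z + y * P x z)
    (hskew : ∀ x y : A, P x y = -P y x)
    (t : A) (ht : ∀ x, P t x = 0)
    (b : Fin n → A) (Ct C1 : Matrix (Fin n) (Fin n) A)
    (hbct : ∀ k l m : Fin n, P (b k) (Ct l m) = if l.1 = 0 ∧ m = k then -1 else 0)
    (hbc1 : ∀ k l m : Fin n, P (b k) (C1 l m) = 0)
    (hbb : ∀ k k' : Fin n, P (b k) (b k') = 0)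
    (hctct : ∀ l m l' m' : Fin n, P (Ct l m) (Ct l' m') = 0)
    (hctc1 : ∀ l m l' m' : Fin n, P (Ct l m) (C1 l' m') = 0)
    (hc1c1 : ∀ l m l' m' : Fin n, P (C1 l m) (C1 l' m') = 0) :
    (∀ i j : Fin n, P (lamVar t Ct C1 i) (lamVar t Ct C1 j) = 0) ∧
    (∀ i j : Fin n, P (muVar t b Ct C1 i) (muVar t b Ct C1 j) = 0) := by
  have hcomm : ∀ {x y : A}, P x y = 0 → P y x = 0 := fun h => by rw [hskew, h, neg_zero]
  let S1 : Set A := {x | x = t ∨ (∃ l m, x = Ct l m) ∨ ∃ l m, x = C1 l m}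
  let S0 : Set A := {x | x = t ∨ (∃ k, x = b k) ∨ (∃ l m, x = C1 l m) ∨
    ∃ l m : Fin n, l.val ≠ 0 ∧ x = Ct l m}
  have hS1 : ∀ x ∈ S1, ∀ y ∈ S1, P x y = 0 := by
    rintro x (rfl | ⟨l, m, rfl⟩ | ⟨l, m, rfl⟩) y (rfl | ⟨l', m', rfl⟩ | ⟨l', m', rfl⟩)
    all_goals first
      | exact ht _ | exact hcomm (ht _) | exact hctct .. | exact hctc1 ..
      | exact hcomm (hctc1 ..) | exact hc1c1 ..
  have hS0 : ∀ x ∈ S0, ∀ y ∈ S0, P x y = 0 := by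
    rintro x (rfl | ⟨k, rfl⟩ | ⟨l, m, rfl⟩ | ⟨l, m, hl, rfl⟩)
      y (rfl | ⟨k', rfl⟩ | ⟨l', m', rfl⟩ | ⟨l', m', hl', rfl⟩)
    all_goals first
      | exact ht _ | exact hcomm (ht _) | exact hbb .. | exact hbc1 .. | exact hcomm (hbc1 ..)
      | exact hctct .. | exact hctc1 .. | exact hcomm (hctc1 ..) | exact hc1c1 ..
      | simp [hbct, hl'] | exact hcomm (by simp [hbct, hl])
  have mem1 {x} (hx : x ∈ S1) := Subfield.subset_closure (s := S1) hx
  have mem0 {x} (hx : x ∈ S0) := Subfield.subset_closure (s := S0) hx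
  have hlam := lamVar_mem (mem1 (Or.inl rfl)) (fun l m => mem1 (Or.inr (Or.inl ⟨l, m, rfl⟩)))
    (fun l m => mem1 (Or.inr (Or.inr ⟨l, m, rfl⟩)))
  have hmu := muVar_mem (mem0 (Or.inl rfl)) (fun k => mem0 (Or.inr (Or.inl ⟨k, rfl⟩)))
    (fun l m => mem0 (Or.inr (Or.inr (Or.inl ⟨l, m, rfl⟩))))
    (fun l m hl => mem0 (Or.inr (Or.inr (Or.inr ⟨l, m, hl, rfl⟩))))
  exact ⟨fun i j => bracket_eq_zero_of_mem_closure haddl hleib hskew hS1 (hlam i) (hlam j),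
    fun i j => bracket_eq_zero_of_mem_closure haddl hleib hskew hS0 (hmu i) (hmu j)⟩
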